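/- Define, for w ∈ D_n, d(w) = Σ_{i∈[n], w(i)>i} (w(i)−i) + Σ_{i∈Neg(w)} |w(i)| + o^D(w) − neg(w). Then for every element w ∈ D_n and every reflection t of D_n, d(w) − dp(t) ≤ d(wt). -/

import Mathlib

open Equiv

/-- The defining condition for membership in the signed permutation group `B_n`:
a permutation of `ℤ` that commutes with negation and fixes every integer of
absolute value greater than `n`. -/
def IsSignedPerm (n : ℕ) (w : Equiv.Perm ℤ) : Prop :=
  (∀ i : ℤ, w (-i) = -(w i)) ∧ ∀ i : ℤ, (n : ℤ) < |i| → w i = i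

/-- The signed permutation group `B_n`, realized as a subgroup of the permutations of `ℤ`. -/
def BGroup (n : ℕ) : Subgroup (Equiv.Perm ℤ) where
  carrier := {w | IsSignedPerm n w}
  one_mem' := ⟨fun _ => rfl, fun _ _ => rfl⟩
  mul_mem' := by
    rintro a b ⟨ha1, ha2⟩ ⟨hb1, hb2⟩
    refine ⟨fun i => ?_, fun i hi => ?_⟩
    · simp only [Equiv.Perm.mul_apply, hb1, ha1]
    · simp only [Equiv.Perm.mul_apply, hb2 i hi, ha2 i hi]
  inv_mem' := by
    rintro a ⟨ha1, ha2⟩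
    refine ⟨fun i => a.injective ?_, fun i hi => a.injective ?_⟩
    · rw [Equiv.Perm.inv_def, Equiv.apply_symm_apply, ha1, Equiv.apply_symm_apply]
    · rw [Equiv.Perm.inv_def, Equiv.apply_symm_apply, ha2 i hi]

/-- `Neg(w)`: the set of positions `i ∈ [1, n]` carrying a negative entry. -/
noncomputable def negSet (n : ℕ) (w : Equiv.Perm ℤ) : Finset ℤ :=
  (Finset.Icc (1 : ℤ) (n : ℤ)).filter (fun i => w i < 0)

/-- `neg(w)`: the number of negative entries in the window of `w`. -/
noncomputable def negB (n : ℕ) (w : Equiv.Perm ℤ) : ℕ := (negSet n w).card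

/-- `k` is a boundary of the type B block decomposition of `w`, i.e. `w` maps
`{1, …, k}` onto `{±1, …, ±k}` (for `0 ≤ k ≤ n`). -/
def IsBdry (n : ℕ) (w : Equiv.Perm ℤ) (k : ℕ) : Prop :=
  k ≤ n ∧ ∀ i : ℤ, 1 ≤ i → i ≤ (k : ℤ) → |w i| ≤ (k : ℤ)

/-- The number of negative entries among the first `k` entries of the window of `w`. -/
noncomputable def negUpTo (w : Equiv.Perm ℤ) (k : ℕ) : ℕ :=
  ((Finset.Icc (1 : ℤ) (k : ℤ)).filter (fun i => w i < 0)).card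

/-- `o^B(w)`: the number of blocks of the type B decomposition of `w` containing an odd
number of negative entries.  A block is the interval between two consecutive boundaries,
and it is counted here via its right endpoint `k` (with left endpoint `k'` the previous
boundary); it has an odd number of negative entries exactly when the parities of
`negUpTo w k` and `negUpTo w k'` differ. -/
noncomputable def oB (n : ℕ) (w : Equiv.Perm ℤ) : ℕ :=
  {k : ℕ | 1 ≤ k ∧ IsBdry n w k ∧ ∃ k' < k, IsBdry n w k' ∧
    (∀ m : ℕ, k' < m → m < k → ¬ IsBdry n w m) ∧
    negUpTo w k % 2 ≠ negUpTo w k' % 2}.ncard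

/-- The number of blocks of the type B decomposition of `w`
(each block is counted via its right endpoint, a nonzero boundary). -/
noncomputable def numBlocksB (n : ℕ) (w : Equiv.Perm ℤ) : ℕ :=
  {k : ℕ | 1 ≤ k ∧ IsBdry n w k}.ncard

/-- The number of blocks of the type D decomposition of `w ∈ D_n`
(each block is counted via its right endpoint, a nonzero boundary at which the
number of preceding negative entries is even). -/
noncomputable def numBlocksD (n : ℕ) (w : Equiv.Perm ℤ) : ℕ :=
  {k : ℕ | 1 ≤ k ∧ IsBdry n w k ∧ Even (negUpTo w k)}.ncard

/-- `o^D(w)`: the number of type B blocks of `w` minus the number of type D blocks of `w`. -/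
noncomputable def oD (n : ℕ) (w : Equiv.Perm ℤ) : ℤ :=
  (numBlocksB n w : ℤ) - (numBlocksD n w : ℤ)

/-- `BReflDepth n t d` means that `t` is a reflection of `B_n` and `d` is its depth:
`t_{ij}` has depth `j - i`, `t_{-i,j}` has depth `i + j - 1`, and `t_{-i,i}` has depth `i`. -/
def BReflDepth (n : ℕ) (t : Equiv.Perm ℤ) (d : ℤ) : Prop :=
  (∃ i j : ℤ, 1 ≤ i ∧ i < j ∧ j ≤ (n : ℤ) ∧
    t = Equiv.swap i j * Equiv.swap (-i) (-j) ∧ d = j - i) ∨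
  (∃ i j : ℤ, 1 ≤ i ∧ i < j ∧ j ≤ (n : ℤ) ∧
    t = Equiv.swap (-i) j * Equiv.swap i (-j) ∧ d = i + j - 1) ∨
  (∃ i : ℤ, 1 ≤ i ∧ i ≤ (n : ℤ) ∧ t = Equiv.swap (-i) i ∧ d = i)

/-- `t` is a reflection of `B_n`. -/
def IsBRefl (n : ℕ) (t : Equiv.Perm ℤ) : Prop := ∃ d, BReflDepth n t d

/-- `DReflDepth n t d` means that `t` is a reflection of `D_n` and `d` is its depth:
`t_{ij}` has depth `j - i` and `t_{-i,j}` has depth `i + j - 2`. -/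
def DReflDepth (n : ℕ) (t : Equiv.Perm ℤ) (d : ℤ) : Prop :=
  (∃ i j : ℤ, 1 ≤ i ∧ i < j ∧ j ≤ (n : ℤ) ∧
    t = Equiv.swap i j * Equiv.swap (-i) (-j) ∧ d = j - i) ∨
  (∃ i j : ℤ, 1 ≤ i ∧ i < j ∧ j ≤ (n : ℤ) ∧
    t = Equiv.swap (-i) j * Equiv.swap i (-j) ∧ d = i + j - 2)

/-- `t` is a reflection of `D_n`. -/
def IsDRefl (n : ℕ) (t : Equiv.Perm ℤ) : Prop := ∃ d, DReflDepth n t d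

/-- The depth of `w ∈ B_n`: the minimum, over all factorizations of `w` into reflections
of `B_n`, of the sum of the depths of the factors. -/
noncomputable def depthB (n : ℕ) (w : Equiv.Perm ℤ) : ℤ :=
  sInf {m : ℤ | ∃ L : List (Equiv.Perm ℤ × ℤ),
    (∀ p ∈ L, BReflDepth n p.1 p.2) ∧ (L.map Prod.fst).prod = w ∧ (L.map Prod.snd).sum = m}

/-- The depth of `w ∈ D_n`: the minimum, over all factorizations of `w` into reflections
of `D_n`, of the sum of the depths of the factors. -/
noncomputable def depthD (n : ℕ) (w : Equiv.Perm ℤ) : ℤ :=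
  sInf {m : ℤ | ∃ L : List (Equiv.Perm ℤ × ℤ),
    (∀ p ∈ L, DReflDepth n p.1 p.2) ∧ (L.map Prod.fst).prod = w ∧ (L.map Prod.snd).sum = m}

/-- The Coxeter generating set `S_B = {t_{-1,1}, t_{12}, …, t_{n-1,n}}` of `B_n`. -/
def SB (n : ℕ) : Set (Equiv.Perm ℤ) :=
  {s | (1 ≤ n ∧ s = Equiv.swap (-1 : ℤ) 1) ∨
    ∃ i : ℤ, 1 ≤ i ∧ i + 1 ≤ (n : ℤ) ∧
      s = Equiv.swap i (i + 1) * Equiv.swap (-i) (-(i + 1))}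

/-- The Coxeter generating set `S_D = {t_{-1,2}, t_{12}, …, t_{n-1,n}}` of `D_n`. -/
def SD (n : ℕ) : Set (Equiv.Perm ℤ) :=
  {s | (2 ≤ n ∧ s = Equiv.swap (-1 : ℤ) 2 * Equiv.swap (1 : ℤ) (-2)) ∨
    ∃ i : ℤ, 1 ≤ i ∧ i + 1 ≤ (n : ℤ) ∧
      s = Equiv.swap i (i + 1) * Equiv.swap (-i) (-(i + 1))}

/-- The Coxeter length `ℓ_S(w)` of `w ∈ B_n`: the minimal length of a word in `S_B`
whose product is `w`. -/
noncomputable def lenB (n : ℕ) (w : Equiv.Perm ℤ) : ℕ :=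
  sInf {r : ℕ | ∃ L : List (Equiv.Perm ℤ), (∀ s ∈ L, s ∈ SB n) ∧ L.prod = w ∧ L.length = r}

/-- The Coxeter length `ℓ_S(w)` of `w ∈ D_n`: the minimal length of a word in `S_D`
whose product is `w`. -/
noncomputable def lenD (n : ℕ) (w : Equiv.Perm ℤ) : ℕ :=
  sInf {r : ℕ | ∃ L : List (Equiv.Perm ℤ), (∀ s ∈ L, s ∈ SD n) ∧ L.prod = w ∧ L.length = r}

/-- The reflection length `ℓ_T(w)` of `w ∈ B_n`: the minimal number of reflections
whose product is `w`. -/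
noncomputable def ellTB (n : ℕ) (w : Equiv.Perm ℤ) : ℕ :=
  sInf {r : ℕ | ∃ L : List (Equiv.Perm ℤ), (∀ t ∈ L, IsBRefl n t) ∧ L.prod = w ∧ L.length = r}

/-- `Σ_{i ∈ [n], w(i) > i} (w(i) - i)`. -/
noncomputable def excSum (n : ℕ) (w : Equiv.Perm ℤ) : ℤ :=
  ∑ i ∈ (Finset.Icc (1 : ℤ) (n : ℤ)).filter (fun i => i < w i), (w i - i)

/-- `Σ_{i ∈ Neg(w)} |w(i)|`. -/
noncomputable def negAbsSum (n : ℕ) (w : Equiv.Perm ℤ) : ℤ :=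
  ∑ i ∈ (Finset.Icc (1 : ℤ) (n : ℤ)).filter (fun i => w i < 0), |w i|

/-- The even signed permutation group `D_n`, the set of elements of `B_n` with an even
number of negative window entries. -/
def DSet (n : ℕ) : Set (Equiv.Perm ℤ) := {w | w ∈ BGroup n ∧ Even (negB n w)}

/-- The formula `d(w)` of Theorem 2.9 in type D. -/
noncomputable def dFormD (n : ℕ) (w : Equiv.Perm ℤ) : ℤ :=
  excSum n w + negAbsSum n w + oD n w - (negB n w : ℤ)



section Aux

open Finset

private def phiD (p v : ℤ) : ℤ := max (v - p) 0 + max (-v) 0 - (if v < 0 then 1 else 0)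

private lemma A_eq (n : ℕ) (w : Equiv.Perm ℤ) :
    excSum n w + negAbsSum n w - (negB n w : ℤ)
      = ∑ p ∈ Finset.Icc (1:ℤ) (n:ℤ), phiD p (w p) := by
  unfold excSum negAbsSum negB negSet phiD
  rw [Finset.sum_filter, Finset.sum_filter, Finset.natCast_card_filter,
    ← Finset.sum_add_distrib, ← Finset.sum_sub_distrib]
  apply Finset.sum_congr rfl
  intro p hp
  rw [Finset.mem_Icc] at hp
  rcases le_or_gt 0 (w p) with h | h
  · rw [if_neg (not_lt.2 h), if_neg (not_lt.2 h), max_eq_right (neg_nonpos.2 h)]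
    rcases le_or_gt (w p) p with h2 | h2
    · rw [if_neg (not_lt.2 h2), max_eq_right (by omega : w p - p ≤ 0)]
    · rw [if_pos h2, max_eq_left (by omega : (0:ℤ) ≤ w p - p)]
  · rw [if_pos h, if_pos h, abs_of_neg h,
      max_eq_left (by omega : (0:ℤ) ≤ -(w p)),
      if_neg (by omega : ¬ p < w p), max_eq_right (by omega : w p - p ≤ 0)]

private lemma sum_diff_pair (s : Finset ℤ) (f : ℤ → ℤ → ℤ) (u w : Equiv.Perm ℤ) (i j : ℤ)
    (hij : i ≠ j) (hi : i ∈ s) (hj : j ∈ s)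
    (h : ∀ p ∈ s, p ≠ i → p ≠ j → u p = w p) :
    ∑ p ∈ s, f p (u p)
      = ∑ p ∈ s, f p (w p) + (f i (u i) + f j (u j)) - (f i (w i) + f j (w j)) := by
  have key : ∑ p ∈ s, (f p (u p) - f p (w p))
      = ∑ p ∈ ({i, j} : Finset ℤ), (f p (u p) - f p (w p)) := by
    refine (Finset.sum_subset ?_ ?_).symm
    · intro x hx
      rcases Finset.mem_insert.1 hx with rfl | hx
      · exact hi
      · rw [Finset.mem_singleton.1 hx]; exact hj
    · intro x hx hx'
      have h1 : x ≠ i := by rintro rfl; exact hx' (Finset.mem_insert_self _ _)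
      have h2 : x ≠ j := by rintro rfl; exact hx' (by simp)
      rw [h x hx h1 h2, sub_self]
  rw [Finset.sum_sub_distrib, Finset.sum_pair hij] at key
  linarith

private lemma signed_ne_zero {n : ℕ} {w : Equiv.Perm ℤ} (hw : IsSignedPerm n w)
    {x : ℤ} (hx : x ≠ 0) : w x ≠ 0 := by
  intro h
  have h2 : w (-x) = w x := by rw [hw.1, h, neg_zero]
  have := w.injective h2
  omega

private lemma bdry_abs_gt {n : ℕ} {w : Equiv.Perm ℤ} (hw : IsSignedPerm n w) {k : ℕ}
    (hb : IsBdry n w k) {j : ℤ} (hj : 1 ≤ j) (hjk : (k:ℤ) < j) : (k:ℤ) < |w j| := by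
  by_contra hle
  push_neg at hle
  set T : Finset ℤ := (Finset.Icc (-(k:ℤ)) (k:ℤ)).erase 0 with hT
  have hmem : ∀ x ∈ T, w x ∈ T := by
    intro x hx
    simp only [hT, Finset.mem_erase, Finset.mem_Icc] at hx ⊢
    obtain ⟨hx0, hx1, hx2⟩ := hx
    have habs : |w x| ≤ (k:ℤ) := by
      rcases lt_or_gt_of_ne hx0 with h | h
      · have h1 := hb.2 (-x) (by omega) (by omega)
        rwa [hw.1, abs_neg] at h1
      · exact hb.2 x (by omega) hx2
    rw [abs_le] at habs
    exact ⟨signed_ne_zero hw hx0, habs.1, habs.2⟩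
  have hsurj := Finset.surj_on_of_inj_on_of_card_le (s := T) (t := T) (fun a _ => w a)
      (fun a ha => hmem a ha) (fun a₁ a₂ _ _ hEq => w.injective hEq) le_rfl
  have hwj : w j ∈ T := by
    simp only [hT, Finset.mem_erase, Finset.mem_Icc]
    rw [abs_le] at hle
    exact ⟨signed_ne_zero hw (by omega), hle.1, hle.2⟩
  obtain ⟨x, hx, hxeq⟩ := hsurj (w j) hwj
  have hxj : x = j := w.injective hxeq.symm
  subst hxj
  simp only [hT, Finset.mem_erase, Finset.mem_Icc] at hx
  omega

private def SOdd (n : ℕ) (w : Equiv.Perm ℤ) : Set ℕ :=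
  {k | 1 ≤ k ∧ IsBdry n w k ∧ ¬ Even (negUpTo w k)}

private lemma SOdd_finite (n : ℕ) (w : Equiv.Perm ℤ) : (SOdd n w).Finite :=
  (Set.finite_Iic n).subset fun _ hk => hk.2.1.1

private lemma oD_eq (n : ℕ) (w : Equiv.Perm ℤ) : oD n w = ((SOdd n w).ncard : ℤ) := by
  unfold oD numBlocksB numBlocksD
  have hBfin : {k : ℕ | 1 ≤ k ∧ IsBdry n w k}.Finite :=
    (Set.finite_Iic n).subset fun _ hk => hk.2.1
  have hsub : {k : ℕ | 1 ≤ k ∧ IsBdry n w k ∧ Even (negUpTo w k)}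
      ⊆ {k | 1 ≤ k ∧ IsBdry n w k} := fun k hk => ⟨hk.1, hk.2.1⟩
  have hdiff : {k : ℕ | 1 ≤ k ∧ IsBdry n w k}
      \ {k | 1 ≤ k ∧ IsBdry n w k ∧ Even (negUpTo w k)} = SOdd n w := by
    ext k
    simp only [Set.mem_diff, Set.mem_setOf_eq, SOdd]
    tauto
  have hkey := Set.ncard_diff_add_ncard_of_subset hsub hBfin
  rw [hdiff] at hkey
  omega

private lemma low_negUpTo {u w : Equiv.Perm ℤ} {k : ℕ}
    (h : ∀ m : ℤ, 1 ≤ m → m ≤ (k:ℤ) → u m = w m) : negUpTo u k = negUpTo w k := by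
  unfold negUpTo
  congr 1
  apply Finset.filter_congr
  intro m hm
  rw [Finset.mem_Icc] at hm
  rw [h m hm.1 hm.2]

private lemma low_bdry {n : ℕ} {u w : Equiv.Perm ℤ} {k : ℕ}
    (h : ∀ m : ℤ, 1 ≤ m → m ≤ (k:ℤ) → u m = w m) : IsBdry n u k ↔ IsBdry n w k := by
  unfold IsBdry
  constructor <;> rintro ⟨h1, h2⟩ <;> refine ⟨h1, fun m hm1 hm2 => ?_⟩
  · rw [← h m hm1 hm2]; exact h2 m hm1 hm2
  · rw [h m hm1 hm2]; exact h2 m hm1 hm2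

private lemma high_bdry {n : ℕ} {u w : Equiv.Perm ℤ} {i j : ℤ} (hi : 1 ≤ i) (hij : i < j)
    {k : ℕ} (hjk : j ≤ (k:ℤ))
    (hagree : ∀ p : ℤ, 1 ≤ p → p ≠ i → p ≠ j → u p = w p)
    (hui : |u i| = |w j|) (huj : |u j| = |w i|) :
    IsBdry n u k ↔ IsBdry n w k := by
  unfold IsBdry
  constructor <;> rintro ⟨h1, h2⟩ <;> refine ⟨h1, fun m hm1 hm2 => ?_⟩
  · by_cases hmi : m = i
    · subst hmi
      have h3 := h2 j (by omega) hjk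
      rwa [huj] at h3
    · by_cases hmj : m = j
      · subst hmj
        have h3 := h2 i (by omega) (by omega)
        rwa [hui] at h3
      · rw [← hagree m hm1 hmi hmj]; exact h2 m hm1 hm2
  · by_cases hmi : m = i
    · subst hmi
      rw [hui]
      exact h2 j (by omega) hjk
    · by_cases hmj : m = j
      · subst hmj
        rw [huj]
        exact h2 i (by omega) (by omega)
      · rw [hagree m hm1 hmi hmj]; exact h2 m hm1 hm2

private lemma high_parity {u w : Equiv.Perm ℤ} {i j : ℤ} (hi : 1 ≤ i) (hij : i < j)
    {k : ℕ} (hjk : j ≤ (k:ℤ))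
    (hagree : ∀ p : ℤ, 1 ≤ p → p ≠ i → p ≠ j → u p = w p)
    (hpar : ((if u i < 0 then (1:ℤ) else 0) + (if u j < 0 then 1 else 0)
      - (if w i < 0 then 1 else 0) - (if w j < 0 then 1 else 0)) % 2 = 0) :
    Even (negUpTo u k) ↔ Even (negUpTo w k) := by
  have hcast : ∀ v : Equiv.Perm ℤ, (negUpTo v k : ℤ)
      = ∑ p ∈ Finset.Icc (1:ℤ) (k:ℤ), (if v p < 0 then (1:ℤ) else 0) := fun v =>
    Finset.natCast_card_filter _ _
  have hdiff := sum_diff_pair (Finset.Icc 1 (k:ℤ)) (fun _ v => if v < 0 then (1:ℤ) else 0)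
    u w i j (by omega) (Finset.mem_Icc.2 ⟨hi, by omega⟩) (Finset.mem_Icc.2 ⟨by omega, hjk⟩)
    (fun p hp h1 h2 => hagree p (Finset.mem_Icc.1 hp).1 h1 h2)
  beta_reduce at hdiff
  rw [← hcast u, ← hcast w] at hdiff
  rw [Nat.even_iff, Nat.even_iff]
  obtain ⟨e1, he1⟩ : ∃ x, (if u i < 0 then (1:ℤ) else 0) = x := ⟨_, rfl⟩
  obtain ⟨e2, he2⟩ : ∃ x, (if u j < 0 then (1:ℤ) else 0) = x := ⟨_, rfl⟩
  obtain ⟨e3, he3⟩ : ∃ x, (if w i < 0 then (1:ℤ) else 0) = x := ⟨_, rfl⟩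
  obtain ⟨e4, he4⟩ : ∃ x, (if w j < 0 then (1:ℤ) else 0) = x := ⟨_, rfl⟩
  rw [he1, he2, he3, he4] at hdiff hpar
  omega

private lemma key_arith (i j a b a' b' d A B : ℤ)
    (hi : 1 ≤ i) (hij : i < j)
    (hA : a = A ∨ a = -A) (hA0 : 0 < A) (hB : b = B ∨ b = -B) (hB0 : 0 < B)
    (hcase : (a' = b ∧ b' = a ∧ d = j - i) ∨ (a' = -b ∧ b' = -a ∧ d = i + j - 2)) :
    phiD i a + phiD j b + max 0 (min j B - max i A) ≤ phiD i a' + phiD j b' + d := by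
  unfold phiD
  rcases hcase with ⟨rfl, rfl, rfl⟩ | ⟨rfl, rfl, rfl⟩ <;>
    rcases hA with rfl | rfl <;> rcases hB with rfl | rfl <;>
    split_ifs <;> omega

private lemma main_aux (n : ℕ) (w u : Equiv.Perm ℤ) (hw : IsSignedPerm n w)
    (i j d : ℤ) (hi : 1 ≤ i) (hij : i < j) (hjn : j ≤ (n:ℤ))
    (hagree : ∀ p : ℤ, 1 ≤ p → p ≠ i → p ≠ j → u p = w p)
    (hcase : (u i = w j ∧ u j = w i ∧ d = j - i) ∨
             (u i = -(w j) ∧ u j = -(w i) ∧ d = i + j - 2)) :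
    dFormD n w - d ≤ dFormD n u := by
  have ha : w i ≠ 0 := signed_ne_zero hw (by omega)
  have hb : w j ≠ 0 := signed_ne_zero hw (by omega)
  obtain ⟨A, hAs, hA0⟩ : ∃ A, (w i = A ∨ w i = -A) ∧ 0 < A := by
    rcases abs_cases (w i) with ⟨h1, h2⟩ | ⟨h1, h2⟩
    · exact ⟨|w i|, Or.inl h1.symm, by omega⟩
    · exact ⟨|w i|, Or.inr (by omega), by omega⟩
  obtain ⟨B, hBs, hB0⟩ : ∃ B, (w j = B ∨ w j = -B) ∧ 0 < B := by
    rcases abs_cases (w j) with ⟨h1, h2⟩ | ⟨h1, h2⟩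
    · exact ⟨|w j|, Or.inl h1.symm, by omega⟩
    · exact ⟨|w j|, Or.inr (by omega), by omega⟩
  have hAabs : |w i| = A := by rcases hAs with h | h <;> rw [h] <;> simp [abs_of_pos hA0]
  have hBabs : |w j| = B := by rcases hBs with h | h <;> rw [h] <;> simp [abs_of_pos hB0]
  -- local difference
  have hAA := sum_diff_pair (Finset.Icc 1 (n:ℤ)) phiD u w i j (by omega)
      (Finset.mem_Icc.2 ⟨hi, by omega⟩) (Finset.mem_Icc.2 ⟨by omega, hjn⟩)
      (fun p hp h1 h2 => hagree p (Finset.mem_Icc.1 hp).1 h1 h2)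
  -- facts about u i, u j abs and parity
  have hui : |u i| = |w j| := by
    rcases hcase with ⟨h1, _, _⟩ | ⟨h1, _, _⟩ <;> rw [h1] <;> simp [abs_neg]
  have huj : |u j| = |w i| := by
    rcases hcase with ⟨_, h2, _⟩ | ⟨_, h2, _⟩ <;> rw [h2] <;> simp [abs_neg]
  have hpar : ((if u i < 0 then (1:ℤ) else 0) + (if u j < 0 then 1 else 0)
      - (if w i < 0 then 1 else 0) - (if w j < 0 then 1 else 0)) % 2 = 0 := by
    rcases hcase with ⟨h1, h2, _⟩ | ⟨h1, h2, _⟩ <;> rw [h1, h2] <;> split_ifs <;> omega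
  -- oD bound
  have hoD : oD n w ≤ oD n u + max 0 (min j B - max i A) := by
    rw [oD_eq, oD_eq]
    set E : Set ℕ := {k : ℕ | max i A ≤ (k:ℤ) ∧ (k:ℤ) < min j B} with hE
    have hEsub : E ⊆ Set.Ico (max i A).toNat (min j B).toNat := by
      intro k hk
      simp only [hE, Set.mem_setOf_eq] at hk
      simp only [Set.mem_Ico]
      omega
    have hEfin : E.Finite := (Set.finite_Ico _ _).subset hEsub
    have hsub : SOdd n w ⊆ SOdd n u ∪ E := by
      intro k hk
      obtain ⟨hk1, hkb, hkodd⟩ := hk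
      rcases lt_or_ge (k:ℤ) i with hlow | hhigh
      · left
        have hag : ∀ m : ℤ, 1 ≤ m → m ≤ (k:ℤ) → u m = w m :=
          fun m h1 h2 => hagree m h1 (by omega) (by omega)
        refine ⟨hk1, (low_bdry hag).2 hkb, ?_⟩
        rw [low_negUpTo hag]
        exact hkodd
      · rcases le_or_gt j (k:ℤ) with hhi | hmid
        · left
          refine ⟨hk1, (high_bdry hi hij hhi hagree hui huj).2 hkb, ?_⟩
          rw [high_parity hi hij hhi hagree hpar]
          exact hkodd
        · right
          have h1 : |w i| ≤ (k:ℤ) := hkb.2 i hi hhigh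
          have h2 : (k:ℤ) < |w j| := bdry_abs_gt hw hkb (by omega) hmid
          rw [hAabs] at h1
          rw [hBabs] at h2
          simp only [hE, Set.mem_setOf_eq]
          omega
    have h1 : (SOdd n w).ncard ≤ (SOdd n u ∪ E).ncard :=
      Set.ncard_le_ncard hsub ((SOdd_finite n u).union hEfin)
    have h2 := Set.ncard_union_le (SOdd n u) E
    have h3 : E.ncard ≤ (min j B).toNat - (max i A).toNat := by
      have h4 := Set.ncard_le_ncard hEsub (Set.finite_Ico _ _)
      rwa [← Finset.coe_Ico, Set.ncard_coe_finset, Nat.card_Ico] at h4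
    omega
  have hkey := key_arith i j (w i) (w j) (u i) (u j) d A B hi hij hAs hA0 hBs hB0 (by
    rcases hcase with ⟨h1, h2, h3⟩ | ⟨h1, h2, h3⟩
    · exact Or.inl ⟨h1, h2, h3⟩
    · exact Or.inr ⟨by rw [h1], by rw [h2], h3⟩)
  have hAw := A_eq n w
  have hAu := A_eq n u
  unfold dFormD
  linarith

end Aux

/-- **Lemma.** For every `w ∈ D_n` and every reflection `t` of `D_n` (of depth `d`),
`d(w) − dp(t) ≤ d(wt)`. -/
theorem dForm_step_D (n : ℕ) (w : Equiv.Perm ℤ) (hw : w ∈ DSet n)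
    (t : Equiv.Perm ℤ) (d : ℤ) (ht : DReflDepth n t d) :
    dFormD n w - d ≤ dFormD n (w * t) := by
  have hw' : IsSignedPerm n w := hw.1
  rcases ht with ⟨i, j, hi, hij, hjn, rfl, rfl⟩ | ⟨i, j, hi, hij, hjn, rfl, rfl⟩
  · refine main_aux n w _ hw' i j _ hi hij hjn ?_ (Or.inl ⟨?_, ?_, rfl⟩)
    · intro p hp h1 h2
      show w _ = w p
      simp only [Equiv.Perm.mul_apply]
      rw [Equiv.swap_apply_of_ne_of_ne (show p ≠ -i by omega) (show p ≠ -j by omega),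
        Equiv.swap_apply_of_ne_of_ne h1 h2]
    · show w _ = w j
      simp only [Equiv.Perm.mul_apply]
      rw [Equiv.swap_apply_of_ne_of_ne (show i ≠ -i by omega) (show i ≠ -j by omega),
        Equiv.swap_apply_left]
    · show w _ = w i
      simp only [Equiv.Perm.mul_apply]
      rw [Equiv.swap_apply_of_ne_of_ne (show j ≠ -i by omega) (show j ≠ -j by omega),
        Equiv.swap_apply_right]
  · refine main_aux n w _ hw' i j _ hi hij hjn ?_ (Or.inr ⟨?_, ?_, rfl⟩)
    · intro p hp h1 h2
      show w _ = w p
      simp only [Equiv.Perm.mul_apply]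
      rw [Equiv.swap_apply_of_ne_of_ne (show p ≠ i from h1) (show p ≠ -j by omega),
        Equiv.swap_apply_of_ne_of_ne (show p ≠ -i by omega) (show p ≠ j from h2)]
    · show w _ = -(w j)
      simp only [Equiv.Perm.mul_apply]
      rw [Equiv.swap_apply_left,
        Equiv.swap_apply_of_ne_of_ne (show -j ≠ -i by omega) (show -j ≠ j by omega), hw'.1]
    · show w _ = -(w i)
      simp only [Equiv.Perm.mul_apply]
      rw [Equiv.swap_apply_of_ne_of_ne (show j ≠ i by omega) (show j ≠ -j by omega),
        Equiv.swap_apply_right, hw'.1]
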